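/- arXiv:1406.5336 — 4 statements merged into one kernel-verified Lean document; each statement's English description precedes it below -/
import Mathlib

section
/- Let m be a natural number, let C : Fin m → Finset (ℕ × Bool) be a family of clauses, and suppose there is an injective map f : Fin m → ℕ such that for every j ∈ Fin m the variable f j occurs in some literal of C j (i.e., (f j, b) ∈ C j for some Boolean b). Then there exists an assignment a : ℕ → Bool satisfying every clause C j, i.e., for every j there is a literal (i, b) ∈ C j with a i = b. -/
/-- If each clause `C j` contains a literal on a representative variable `f j`, with the
representatives pairwise distinct, then the clauses are simultaneously satisfiable. -/
theorem matching_implies_satisfiable (m : ℕ) (C : Fin m → Finset (ℕ × Bool))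
    (f : Fin m → ℕ) (hf : Function.Injective f)
    (hocc : ∀ j : Fin m, ∃ b : Bool, (f j, b) ∈ C j) :
    ∃ a : ℕ → Bool, ∀ j : Fin m, ∃ p ∈ C j, a p.1 = p.2 := by
  choose b hb using hocc
  refine ⟨fun i => if h : ∃ j, f j = i then b h.choose else false, fun j => ?_⟩
  refine ⟨(f j, b j), hb j, ?_⟩
  have h : ∃ k, f k = f j := ⟨j, rfl⟩
  simp only [dif_pos h]
  rw [hf h.choose_spec]
end

section
/- Let B be a type, h ≥ 1, and R : Fin (h+1) → Set B a family of sets with ⋂_{i} R i = ∅, and suppose A⁰ := ⋂_{i ≠ 1} R i and A¹ := ⋂_{i ≠ 0} R i are both nonempty. Let ℓ', u be natural numbers, s : Fin u → Bool a family of clause signs, and v₁, v₂, v₃ : Fin u → Fin ℓ' families of variable indices. Write R' false = R 0 and R' true = R 1. Then there exists a Boolean assignment x : Fin ℓ' → Bool such that for every t ∈ Fin u at least one of x (v₁ t) = s t, x (v₂ t) = s t, x (v₃ t) = s t holds, if and only if there exists a : Fin ℓ' → B such that (i) a k ∈ R i for every k ∈ Fin ℓ' and every i with i ≠ 0 and i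 ≠ 1, and (ii) for every t ∈ Fin u at least one of a (v₁ t) ∈ R' (s t), a (v₂ t) ∈ R' (s t), a (v₃ t) ∈ R' (s t) holds. -/
/-! A Boolean value `b` is encoded by an element of `A^b`, which lies in every `R i` except
possibly `R (1 - b)`. Conversely, a value lying in every `R i` with `i ≠ 0, 1` cannot lie in both
`R 0` and `R 1` (as `⋂ i, R i = ∅`), so it decodes to `true` iff it lies outside `R 0`. Both
translations preserve each literal, hence every monotone clause. -/

section ClausesHold

variable {ι τ β B : Type*}

def ClausesHold (s : τ → β) (v₁ v₂ v₃ : τ → ι) (P : ι → β → Prop) : Prop :=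
  ∀ t, P (v₁ t) (s t) ∨ P (v₂ t) (s t) ∨ P (v₃ t) (s t)

theorem ClausesHold.mono {s : τ → β} {v₁ v₂ v₃ : τ → ι} {P Q : ι → β → Prop}
    (hP : ClausesHold s v₁ v₂ v₃ P) (hPQ : ∀ k b, P k b → Q k b) :
    ClausesHold s v₁ v₂ v₃ Q :=
  fun t => (hP t).imp (hPQ _ _) (.imp (hPQ _ _) (hPQ _ _))

variable {C : Set B} {E : Bool → Set B} {s : τ → Bool} {v₁ v₂ v₃ : τ → ι}

theorem exists_clausesHold_mem_of_bool (hE : ∀ b, (C ∩ E b).Nonempty) {x : ι → Bool}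
    (hx : ClausesHold s v₁ v₂ v₃ fun k b => x k = b) :
    ∃ a : ι → B, (∀ k, a k ∈ C) ∧ ClausesHold s v₁ v₂ v₃ fun k b => a k ∈ E b := by
  choose c hcC hcE using hE
  exact ⟨fun k => c (x k), fun k => hcC _, hx.mono fun k b hkb => hkb ▸ hcE _⟩

theorem exists_clausesHold_bool_of_mem (hdisj : C ∩ E false ∩ E true = ∅) {a : ι → B}
    (haC : ∀ k, a k ∈ C) (ha : ClausesHold s v₁ v₂ v₃ fun k b => a k ∈ E b) :
    ∃ x : ι → Bool, ClausesHold s v₁ v₂ v₃ fun k b => x k = b := by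
  classical
  refine ⟨fun k => decide (a k ∉ E false), ha.mono fun k b hkb => ?_⟩
  cases b with
  | false => simpa using hkb
  | true =>
    have hF : a k ∉ E false := fun hF =>
      Set.eq_empty_iff_forall_notMem.mp hdisj _ ⟨⟨haC k, hF⟩, hkb⟩
    simpa using hF

theorem exists_clausesHold_bool_iff (hE : ∀ b, (C ∩ E b).Nonempty)
    (hdisj : C ∩ E false ∩ E true = ∅) :
    (∃ x : ι → Bool, ClausesHold s v₁ v₂ v₃ fun k b => x k = b) ↔
      ∃ a : ι → B, (∀ k, a k ∈ C) ∧ ClausesHold s v₁ v₂ v₃ fun k b => a k ∈ E b :=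
  ⟨fun ⟨_, hx⟩ => exists_clausesHold_mem_of_bool hE hx,
    fun ⟨_, haC, ha⟩ => exists_clausesHold_bool_of_mem hdisj haC ha⟩

end ClausesHold

/-- The MONSAT encoding at the core of Theorem 6: a monotone 3-CNF (clause `t` requires
`x = s t` at one of the positions `v₁ t, v₂ t, v₃ t`) is satisfiable iff the associated
CSP instance over `B` (with `A⁰ = ⋂_{i ≠ 1} R i` and `A¹ = ⋂_{i ≠ 0} R i` encoding the
Boolean values) is satisfiable. -/
theorem monSat_encoding {B : Type*} (h : ℕ) (hh : 1 ≤ h) (R : Fin (h + 1) → Set B)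
    (hempty : (⋂ i, R i) = ∅)
    (hA0 : (⋂ i, ⋂ _ : i ≠ (1 : Fin (h + 1)), R i).Nonempty)
    (hA1 : (⋂ i, ⋂ _ : i ≠ (0 : Fin (h + 1)), R i).Nonempty)
    (ℓ' u : ℕ) (s : Fin u → Bool) (v₁ v₂ v₃ : Fin u → Fin ℓ') :
    (∃ x : Fin ℓ' → Bool,
        ∀ t : Fin u, x (v₁ t) = s t ∨ x (v₂ t) = s t ∨ x (v₃ t) = s t) ↔
      (∃ a : Fin ℓ' → B,
        (∀ k : Fin ℓ', ∀ i : Fin (h + 1), i ≠ 0 → i ≠ 1 → a k ∈ R i) ∧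
        (∀ t : Fin u,
          a (v₁ t) ∈ (if s t then R 1 else R 0) ∨
          a (v₂ t) ∈ (if s t then R 1 else R 0) ∨
          a (v₃ t) ∈ (if s t then R 1 else R 0))) := by
  obtain ⟨m, rfl⟩ : ∃ m, h = m + 1 := ⟨h - 1, by omega⟩
  let C : Set B := {c | ∀ i : Fin (m + 2), i ≠ 0 → i ≠ 1 → c ∈ R i}
  have hE : ∀ b : Bool, (C ∩ if b then R 1 else R 0).Nonempty := by
    rintro (_ | _)
    · obtain ⟨c, hc⟩ := hA0
      rw [Set.mem_iInter₂] at hc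
      exact ⟨c, fun i _ hi1 => hc i hi1, hc 0 zero_ne_one⟩
    · obtain ⟨c, hc⟩ := hA1
      rw [Set.mem_iInter₂] at hc
      exact ⟨c, fun i hi0 _ => hc i hi0, hc 1 one_ne_zero⟩
  have hdisj : C ∩ R 0 ∩ R 1 = ∅ := by
    refine Set.subset_empty_iff.mp (hempty ▸ ?_)
    rintro c ⟨⟨hC, h0⟩, h1⟩
    refine Set.mem_iInter.mpr fun i => ?_
    by_cases hi0 : i = 0
    · exact hi0 ▸ h0
    by_cases hi1 : i = 1
    · exact hi1 ▸ h1
    exact hC i hi0 hi1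
  exact exists_clausesHold_bool_iff hE hdisj
end

section
/- Let p be a prime, V a finite type with |V| = p, E : V → V → Prop an irreflexive relation (a loopless directed graph on V), and z ∈ V. Then the following are equivalent: (i) there exists a bijection φ : ZMod p ≃ V with E (φ i) (φ (i+1)) for every i ∈ ZMod p (a directed Hamiltonian cycle in E); (ii) there exists a group structure on V (a multiplication making V a group) such that E u (u * z) holds for every u ∈ V. -/
/-- Multiplication of the group structure `inst` on `V`. -/
def mulOf {V : Type*} (inst : Group V) (a b : V) : V :=
  letI := inst
  a * b

/-- A loopless digraph `E` on `p` vertices (`p` prime) has a directed Hamiltonian cycle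
iff there is a group structure on the vertex set such that every vertex `u` has an edge
to `u * z`. -/
theorem hamCycle_iff_groupStructure (p : ℕ) [Fact p.Prime] {V : Type*} [Fintype V]
    (hV : Fintype.card V = p) (E : V → V → Prop) (hE : ∀ v, ¬ E v v) (z : V) :
    (∃ φ : ZMod p ≃ V, ∀ i : ZMod p, E (φ i) (φ (i + 1))) ↔
      (∃ inst : Group V, ∀ u : V, E u (mulOf inst u z)) := by
  have hp : p.Prime := Fact.out
  constructor
  · rintro ⟨φ, hφ⟩
    set t : ZMod p := φ.symm z - 1 with ht
    let ψ : ZMod p ≃ V := (Equiv.addLeft t).trans φ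
    let e : V ≃ Multiplicative (ZMod p) :=
      ψ.symm.trans Multiplicative.ofAdd
    refine ⟨e.group, fun u => ?_⟩
    have hmul : mulOf e.group u z = e.symm (e u * e z) := rfl
    have hψ : ∀ v, e.symm (e u * e v) = ψ (ψ.symm u + ψ.symm v) := by
      intro v; rfl
    rw [hmul, hψ]
    have hψs : ∀ v : V, ψ.symm v = -t + φ.symm v := fun v => rfl
    have hψa : ∀ i : ZMod p, ψ i = φ (t + i) := fun i => rfl
    rw [hψa, hψs, hψs]
    have : t + (-t + φ.symm u + (-t + φ.symm z)) = φ.symm u + 1 := by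
      rw [ht]; ring
    rw [this]
    have := hφ (φ.symm u)
    simpa using this
  · rintro ⟨inst, hinst⟩
    letI := inst
    have hz : z ≠ 1 := by
      intro h
      have := hinst 1
      rw [h] at this
      exact hE 1 (by simpa [mulOf] using this)
    have horder : orderOf z = p := by
      have hdvd : orderOf z ∣ p := hV ▸ orderOf_dvd_card
      rcases (hp.eq_one_or_self_of_dvd _ hdvd) with h | h
      · exact absurd (orderOf_eq_one_iff.mp h) hz
      · exact h
    have hp1 : 1 < p := hp.one_lt
    haveI : NeZero p := ⟨hp.ne_zero⟩
    let f : ZMod p → V := fun i => z ^ i.val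
    have hinj : Function.Injective f := by
      intro i j hij
      have := (pow_eq_pow_iff_modEq).mp hij
      rw [horder] at this
      have h1 : i.val % p = j.val % p := this
      rw [Nat.mod_eq_of_lt (ZMod.val_lt i), Nat.mod_eq_of_lt (ZMod.val_lt j)] at h1
      exact ZMod.val_injective p h1
    have hbij : Function.Bijective f := by
      rw [Fintype.bijective_iff_injective_and_card]
      exact ⟨hinj, by simp [ZMod.card, hV]⟩
    refine ⟨Equiv.ofBijective f hbij, fun i => ?_⟩
    have hnext : f (i + 1) = f i * z := by
      show z ^ (i + 1).val = z ^ i.val * z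
      rw [← pow_succ]
      apply (pow_eq_pow_iff_modEq).mpr
      rw [horder]
      have : (i + 1).val = (i.val + 1) % p := by
        rw [ZMod.val_add, ZMod.val_one]
      rw [this]
      exact (Nat.mod_modEq _ _)
    simp only [Equiv.ofBijective_apply, hnext]
    exact hinst (f i)
end

section
/- Let n, m be natural numbers and E : Fin m → Finset (Fin n × Fin n) a family of edge sets on the vertex set Fin n. Let V' = Fin n ⊕ (Fin m × (Fin n × Fin n) × Bool) be the vertex set extended by two new vertices for each j ∈ Fin m and each pair e ∈ E j. Then the following are equivalent: (i) there exists a 2-coloring c : Fin n → Bool such that for every j ∈ Fin m some pair (u,v) ∈ E j satisfies c u ≠ c v; (ii) there exists a 2-coloring c' : V' → Bool such that for every j ∈ Fin m and every pair e = (u,v) ∈ E j one has c' (inl u) ≠ c' (inr (j, e, false)) and c' (inl v) ≠ c' (inr (j, e, true)), and for every j ∈ Fin m there exists a pair e ∈ E j with c' (inr (j, e, false)) ≠ c' (inr (j, e, true)). -/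
/-! Each new vertex is joined by a singleton constraint to one endpoint, so in any solution it
carries the opposite color of that endpoint. Negating both ends of an edge does not change whether
it is bichromatic, so the new edge `{uvj1, uvj2}` is bichromatic exactly when `{u, v}` is. -/

theorem Bool.ne_iff_ne_of_ne_of_ne {a b x y : Bool} (hx : a ≠ x) (hy : b ≠ y) :
    x ≠ y ↔ a ≠ b := by
  cases a <;> cases b <;> simp_all

section Subdivision

variable {V ι : Type*}

def subdivisionColoring (c : V → Bool) : V ⊕ (ι × (V × V) × Bool) → Bool :=
  Sum.elim c fun p => !c (if p.2.2 then p.2.1.2 else p.2.1.1)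

theorem subdivisionColoring_inl_ne_inr (c : V → Bool) (j : ι) (e : V × V) :
    subdivisionColoring (ι := ι) c (Sum.inl e.1) ≠
        subdivisionColoring c (Sum.inr (j, e, false)) ∧
      subdivisionColoring (ι := ι) c (Sum.inl e.2) ≠
        subdivisionColoring c (Sum.inr (j, e, true)) := by
  simp [subdivisionColoring]

theorem subdivisionColoring_inr_ne_iff (c : V → Bool) (j : ι) (e : V × V) :
    subdivisionColoring c (Sum.inr (j, e, false)) ≠ subdivisionColoring c (Sum.inr (j, e, true))
      ↔ c e.1 ≠ c e.2 := by
  simp [subdivisionColoring]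

theorem twoCol_subdivision_iff (E : ι → Set (V × V)) :
    (∃ c : V → Bool, ∀ j, ∃ e ∈ E j, c e.1 ≠ c e.2) ↔
      ∃ c' : V ⊕ (ι × (V × V) × Bool) → Bool,
        (∀ j, ∀ e ∈ E j,
          c' (Sum.inl e.1) ≠ c' (Sum.inr (j, e, false)) ∧
          c' (Sum.inl e.2) ≠ c' (Sum.inr (j, e, true))) ∧
        ∀ j, ∃ e ∈ E j, c' (Sum.inr (j, e, false)) ≠ c' (Sum.inr (j, e, true)) := by
  constructor
  · rintro ⟨c, hc⟩
    refine ⟨subdivisionColoring c, fun j e _ => subdivisionColoring_inl_ne_inr c j e,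
      fun j => ?_⟩
    obtain ⟨e, he, hne⟩ := hc j
    exact ⟨e, he, (subdivisionColoring_inr_ne_iff c j e).2 hne⟩
  · rintro ⟨c', hsub, hbichrom⟩
    refine ⟨c' ∘ Sum.inl, fun j => ?_⟩
    obtain ⟨e, he, hne⟩ := hbichrom j
    obtain ⟨h₁, h₂⟩ := hsub j e he
    exact ⟨e, he, (Bool.ne_iff_ne_of_ne_of_ne h₁ h₂).1 hne⟩

end Subdivision

/-- The edge-subdivision reduction making a union-closure 2-COL instance repetition free
preserves solvability: the original instance `E` has a 2-coloring with a bichromatic pair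
in each `E j` iff the subdivided instance on the extended vertex set does. -/
theorem twoCol_subdivision_equiv (n m : ℕ) (E : Fin m → Finset (Fin n × Fin n)) :
    (∃ c : Fin n → Bool, ∀ j : Fin m, ∃ e ∈ E j, c e.1 ≠ c e.2) ↔
      (∃ c' : (Fin n ⊕ (Fin m × (Fin n × Fin n) × Bool)) → Bool,
        (∀ j : Fin m, ∀ e ∈ E j,
          c' (Sum.inl e.1) ≠ c' (Sum.inr (j, e, false)) ∧
          c' (Sum.inl e.2) ≠ c' (Sum.inr (j, e, true))) ∧
        (∀ j : Fin m, ∃ e ∈ E j,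
          c' (Sum.inr (j, e, false)) ≠ c' (Sum.inr (j, e, true)))) :=
  twoCol_subdivision_iff fun j => (E j : Set (Fin n × Fin n))
end
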